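/- For any words u and v over the alphabet with binders, the set of right-closed names of the concatenation uv equals (rc(u) \ (lc(v) ∪ lo(v))) ∪ rc(v). -/

import Mathlib

inductive Letter (A : Type) : Type
  | free : A → Letter A
  | op   : A → Letter A
  | cl   : A → Letter A
  | both : A → Letter A

open scoped Classical

noncomputable def lo {A : Type} : List (Letter A) → Set A
  | [] => ∅
  | Letter.free a :: w => lo w ∪ {a}
  | Letter.op a :: w => lo w \ {a}
  | Letter.cl a :: w => lo w ∪ {a}
  | Letter.both a :: w => lo w \ {a}

noncomputable def lc {A : Type} : List (Letter A) → Set A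
  | [] => ∅
  | Letter.free a :: w => lc w \ {a}
  | Letter.op a :: w => lc w ∪ {a}
  | Letter.cl a :: w => lc w \ {a}
  | Letter.both a :: w => lc w ∪ {a}

noncomputable def rc {A : Type} : List (Letter A) → Set A
  | [] => ∅
  | Letter.free _ :: w => rc w
  | Letter.op _ :: w => rc w
  | Letter.cl a :: w => if a ∈ lc w ∪ lo w then rc w else rc w ∪ {a}
  | Letter.both a :: w => if a ∈ lc w ∪ lo w then rc w else rc w ∪ {a}

def RNS {A : Type} (w : List (Letter A)) : Prop :=
  ∀ u v : List (Letter A), w = u ++ v → rc u ∩ lo v = ∅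

/-! Every letter adds its name to `lc ∪ lo`, so `lc w ∪ lo w` is the set of names occurring
in `w` and is additive under concatenation. By induction on `u`, only a leading closing letter
`a⟩` or `⟨a⟩` needs care: it adds `a` to `rc` of the whole word iff `a` occurs in neither `u`
nor `v`, that is, iff it adds `a` to `rc` of its prefix and `a ∉ lc v ∪ lo v`. -/

def Letter.name {A : Type} : Letter A → A
  | free a | op a | cl a | both a => a

lemma lc_union_lo_cons {A : Type} (l : Letter A) (w : List (Letter A)) :
    lc (l :: w) ∪ lo (l :: w) = insert l.name (lc w ∪ lo w) := by
  ext x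
  cases l <;> simp only [lc, lo, Letter.name, Set.mem_union, Set.mem_sdiff,
    Set.mem_singleton_iff, Set.mem_insert_iff] <;> tauto

lemma lc_union_lo_append {A : Type} (u v : List (Letter A)) :
    lc (u ++ v) ∪ lo (u ++ v) = (lc u ∪ lo u) ∪ (lc v ∪ lo v) := by
  induction u with
  | nil => simp [lc, lo]
  | cons l u ih => simp only [List.cons_append, lc_union_lo_cons, ih, Set.insert_union]

lemma ite_mem_union_sdiff_union {α : Type*} (a : α) (S T X Y : Set α) [Decidable (a ∈ S ∪ T)]
    [Decidable (a ∈ S)] :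
    (if a ∈ S ∪ T then X \ T ∪ Y else X \ T ∪ Y ∪ {a}) =
      (if a ∈ S then X else X ∪ {a}) \ T ∪ Y := by
  by_cases hS : a ∈ S <;> by_cases hT : a ∈ T <;>
    simp only [Set.mem_union, hS, hT, or_true, or_false, if_true, if_false] <;>
    ext x <;> by_cases hx : x = a <;> simp [hx, hT]

theorem rc_append {A : Type} (u v : List (Letter A)) :
    rc (u ++ v) = (rc u \ (lc v ∪ lo v)) ∪ rc v := by
  induction u with
  | nil => simp [rc]
  | cons l u ih =>
    cases l <;>
      simp only [List.cons_append, rc, ih, lc_union_lo_append, ite_mem_union_sdiff_union]
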